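/- arXiv:2312.07502 — 5 statements merged into one kernel-verified Lean document; each statement's English description precedes it below -/
import Mathlib

section
/- The limit as x tends to infinity of γ(x+1, x)/Γ(x+1) equals 1/2, where γ(a,x) = ∫₀ˣ e^{-t} t^{a-1} dt is the lower incomplete gamma function and Γ is the gamma function. -/
open Real Filter MeasureTheory Set Topology

/-!
Laplace's method. Substituting `t = x + s √x` turns `γ(x+1, x)` and `Γ(x+1)` into the same factor
`√x x^x e^{-x}` times the integrals of `gammaProfile x` over `(-√x, 0]` and `(-√x, ∞)`.
Since `log (1 + u) - u` lies between `-u²/2` and `-u²/(2(1+u))`, the profile tends pointwise to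
`exp (-s²/2)` and is dominated by `exp (-s²/2)` for `s ≤ 0` and by `exp ((1-s)/2)` for `s ≥ 0`,
so the ratio tends to `∫_{s ≤ 0} exp (-s²/2) / ∫ exp (-s²/2) = 1/2`.
-/

section LogOneAdd

variable {u : ℝ}

lemma monotoneOn_log_one_add_sub_self_add_sq_div_two :
    MonotoneOn (fun u : ℝ => log (1 + u) - u + u ^ 2 / 2) (Ioi (-1)) := by
  have hderiv : ∀ u ∈ Ioi (-1 : ℝ),
      HasDerivAt (fun u : ℝ => log (1 + u) - u + u ^ 2 / 2) (u ^ 2 / (1 + u)) u := by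
    intro u hu
    have h1 : 0 < 1 + u := by linarith [mem_Ioi.mp hu]
    refine ((((hasDerivAt_id u).const_add 1).log h1.ne').sub (hasDerivAt_id u) |>.add
      ((hasDerivAt_pow 2 u).div_const 2)).congr_deriv ?_
    simp only [id]
    field_simp
    ring
  refine monotoneOn_of_hasDerivWithinAt_nonneg (convex_Ioi _)
    (fun u hu => (hderiv u hu).continuousAt.continuousWithinAt)
    (fun u hu => (hderiv u (interior_subset hu)).hasDerivWithinAt) fun u hu => ?_
  have h1 : 0 < 1 + u := by linarith [mem_Ioi.mp (interior_subset hu)]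
  positivity

lemma antitoneOn_log_one_add_sub_self_add_sq_div_two_mul_one_add :
    AntitoneOn (fun u : ℝ => log (1 + u) - u + u ^ 2 / (2 * (1 + u))) (Ioi (-1)) := by
  have hderiv : ∀ u ∈ Ioi (-1 : ℝ),
      HasDerivAt (fun u : ℝ => log (1 + u) - u + u ^ 2 / (2 * (1 + u)))
        (-(u ^ 2 / (2 * (1 + u) ^ 2))) u := by
    intro u hu
    have h1 : 0 < 1 + u := by linarith [mem_Ioi.mp hu]
    refine ((((hasDerivAt_id u).const_add 1).log h1.ne').sub (hasDerivAt_id u) |>.add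
      ((hasDerivAt_pow 2 u).div (((hasDerivAt_id u).const_add 1).const_mul 2)
        (by simp only [id]; positivity))).congr_deriv ?_
    simp only [id]
    field_simp
    ring
  refine antitoneOn_of_hasDerivWithinAt_nonpos (convex_Ioi _)
    (fun u hu => (hderiv u hu).continuousAt.continuousWithinAt)
    (fun u hu => (hderiv u (interior_subset hu)).hasDerivWithinAt) fun u hu => ?_
  have h1 : 0 < 1 + u := by linarith [mem_Ioi.mp (interior_subset hu)]
  have : 0 ≤ u ^ 2 / (2 * (1 + u) ^ 2) := by positivity
  linarith

lemma log_one_add_sub_self_le_neg_sq_div_two (h1 : -1 < u) (h0 : u ≤ 0) :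
    log (1 + u) - u ≤ -u ^ 2 / 2 := by
  have := monotoneOn_log_one_add_sub_self_add_sq_div_two h1 (by norm_num : (-1 : ℝ) < 0) h0
  norm_num at this
  linarith

lemma neg_sq_div_two_le_log_one_add_sub_self (h0 : 0 ≤ u) : -u ^ 2 / 2 ≤ log (1 + u) - u := by
  have := monotoneOn_log_one_add_sub_self_add_sq_div_two (by norm_num : (-1 : ℝ) < 0)
    (by linarith : (-1 : ℝ) < u) h0
  norm_num at this
  linarith

lemma neg_sq_div_two_mul_one_add_le_log_one_add_sub_self (h1 : -1 < u) (h0 : u ≤ 0) :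
    -u ^ 2 / (2 * (1 + u)) ≤ log (1 + u) - u := by
  have := antitoneOn_log_one_add_sub_self_add_sq_div_two_mul_one_add h1
    (by norm_num : (-1 : ℝ) < 0) h0
  norm_num at this
  rw [neg_div]
  linarith

lemma log_one_add_sub_self_le_neg_sq_div_two_mul_one_add (h0 : 0 ≤ u) :
    log (1 + u) - u ≤ -u ^ 2 / (2 * (1 + u)) := by
  have := antitoneOn_log_one_add_sub_self_add_sq_div_two_mul_one_add
    (by norm_num : (-1 : ℝ) < 0) (by linarith : (-1 : ℝ) < u) h0
  norm_num at this
  rw [neg_div]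
  linarith

lemma log_one_add_sub_self_mem_uIcc (h1 : -1 < u) :
    log (1 + u) - u ∈ uIcc (-u ^ 2 / 2) (-u ^ 2 / (2 * (1 + u))) := by
  rcases le_total u 0 with h0 | h0
  · exact mem_uIcc.2 (Or.inr ⟨neg_sq_div_two_mul_one_add_le_log_one_add_sub_self h1 h0,
      log_one_add_sub_self_le_neg_sq_div_two h1 h0⟩)
  · exact mem_uIcc.2 (Or.inl ⟨neg_sq_div_two_le_log_one_add_sub_self h0,
      log_one_add_sub_self_le_neg_sq_div_two_mul_one_add h0⟩)

end LogOneAdd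

/-- The integrand `exp (-t) * t ^ x` of `Γ(x+1)` in the variable `s = (t - x) / √x`, divided by its
maximum `x ^ x * exp (-x)`. It is meaningful only for `s > -√x`, i.e. `t > 0`. -/
noncomputable def gammaProfile (x s : ℝ) : ℝ := exp (x * (log (1 + s / √x) - s / √x))

section GammaProfile

variable {x s : ℝ}

lemma gammaProfile_pos (x s : ℝ) : 0 < gammaProfile x s := exp_pos _

lemma neg_one_lt_div_sqrt (hx : 0 < x) (hs : -√x < s) : -1 < s / √x := by
  rwa [lt_div_iff₀ (sqrt_pos.2 hx), neg_one_mul]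

lemma mul_neg_div_sqrt_sq_div (hx : 0 < x) (s c : ℝ) :
    x * (-(s / √x) ^ 2 / c) = -s ^ 2 / c := by
  rw [div_pow, sq_sqrt hx.le]
  field_simp

lemma tendsto_gammaProfile (s : ℝ) :
    Tendsto (fun x => gammaProfile x s) atTop (𝓝 (exp (-s ^ 2 / 2))) := by
  have hu : Tendsto (fun x => s / √x) atTop (𝓝 0) :=
    tendsto_const_nhds.div_atTop tendsto_sqrt_atTop
  have hupper : Tendsto (fun x => -s ^ 2 / (2 * (1 + s / √x))) atTop (𝓝 (-s ^ 2 / 2)) := by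
    simpa [Pi.div_def] using tendsto_const_nhds.div ((hu.const_add 1).const_mul 2) (by norm_num)
  have hmem : ∀ᶠ x in atTop, x * (log (1 + s / √x) - s / √x) ∈
      uIcc (-s ^ 2 / 2) (-s ^ 2 / (2 * (1 + s / √x))) := by
    filter_upwards [eventually_gt_atTop 0, tendsto_sqrt_atTop.eventually_gt_atTop (-s)]
      with x hx hs
    have h := mem_image_of_mem (x * ·)
      (log_one_add_sub_self_mem_uIcc (neg_one_lt_div_sqrt hx (neg_lt.1 hs)))
    rwa [image_const_mul_uIcc, mul_neg_div_sqrt_sq_div hx, mul_neg_div_sqrt_sq_div hx] at h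
  refine (continuous_exp.tendsto _).comp (tendsto_of_tendsto_of_tendsto_of_le_of_le' ?_ ?_
    (hmem.mono fun _ h => h.1) (hmem.mono fun _ h => h.2))
  · convert tendsto_const_nhds.min hupper using 2
    exact (min_self _).symm
  · convert tendsto_const_nhds.max hupper using 2
    exact (max_self _).symm

lemma gammaProfile_le_of_nonpos (hx : 0 < x) (hs : -√x < s) (h0 : s ≤ 0) :
    gammaProfile x s ≤ exp (-s ^ 2 / 2) := by
  refine exp_le_exp.2 ?_
  calc x * (log (1 + s / √x) - s / √x) ≤ x * (-(s / √x) ^ 2 / 2) :=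
        mul_le_mul_of_nonneg_left (log_one_add_sub_self_le_neg_sq_div_two
          (neg_one_lt_div_sqrt hx hs) (div_nonpos_of_nonpos_of_nonneg h0 (sqrt_nonneg x))) hx.le
    _ = -s ^ 2 / 2 := mul_neg_div_sqrt_sq_div hx s 2

lemma gammaProfile_le_of_nonneg (hx : 1 ≤ x) (h0 : 0 ≤ s) :
    gammaProfile x s ≤ exp ((1 - s) / 2) := by
  have hx0 : 0 < x := by linarith
  have hu0 : 0 ≤ s / √x := div_nonneg h0 (sqrt_nonneg x)
  have hus : s / √x ≤ s := div_le_self h0 (one_le_sqrt.2 hx)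
  refine exp_le_exp.2 ?_
  calc x * (log (1 + s / √x) - s / √x) ≤ x * (-(s / √x) ^ 2 / (2 * (1 + s / √x))) :=
        mul_le_mul_of_nonneg_left (log_one_add_sub_self_le_neg_sq_div_two_mul_one_add hu0) hx0.le
    _ = -s ^ 2 / (2 * (1 + s / √x)) := mul_neg_div_sqrt_sq_div hx0 s _
    _ ≤ -s ^ 2 / (2 * (1 + s)) := by
        rw [div_le_div_iff₀ (by positivity) (by positivity)]
        nlinarith [sq_nonneg s]
    _ ≤ (1 - s) / 2 := by
        rw [div_le_div_iff₀ (by positivity) (by norm_num)]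
        nlinarith

end GammaProfile

lemma integrable_exp_neg_sq_div_two : Integrable fun s : ℝ => exp (-s ^ 2 / 2) := by
  simpa [neg_div, div_eq_inv_mul] using integrable_exp_neg_mul_sq (by norm_num : (0 : ℝ) < 1 / 2)

lemma integrableOn_exp_one_sub_div_two_Ioi :
    IntegrableOn (fun s : ℝ => exp ((1 - s) / 2)) (Ioi 0) := by
  refine IntegrableOn.congr_fun
    ((exp_neg_integrableOn_Ioi 0 (by norm_num : (0 : ℝ) < 1 / 2)).const_mul (exp (1 / 2)))
    (fun s _ => ?_) measurableSet_Ioi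
  rw [← exp_add]
  ring_nf

lemma tendsto_setIntegral_gammaProfile (A : Set ℝ) :
    Tendsto (fun x => ∫ s in A ∩ Ioi (-√x), gammaProfile x s) atTop
      (𝓝 (∫ s in A, exp (-s ^ 2 / 2))) := by
  set bound : ℝ → ℝ :=
    fun s => exp (-s ^ 2 / 2) + (Ioi 0).indicator (fun s => exp ((1 - s) / 2)) s
  have hbound : Integrable bound :=
    integrable_exp_neg_sq_div_two.add
      (integrableOn_exp_one_sub_div_two_Ioi.integrable_indicator measurableSet_Ioi)
  simp_rw [← setIntegral_indicator measurableSet_Ioi]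
  refine tendsto_integral_filter_of_dominated_convergence bound ?_ ?_ hbound.integrableOn ?_
  · refine Eventually.of_forall fun x =>
      (Measurable.indicator ?_ measurableSet_Ioi).aestronglyMeasurable
    unfold gammaProfile
    fun_prop
  · filter_upwards [eventually_ge_atTop 1] with x hx
    refine ae_of_all _ fun s => ?_
    dsimp only [bound]
    have hind : 0 ≤ (Ioi 0).indicator (fun s => exp ((1 - s) / 2)) s :=
      indicator_nonneg (fun _ _ => (exp_pos _).le) s
    by_cases hs : s ∈ Ioi (-√x)
    · rw [indicator_of_mem hs, norm_of_nonneg (gammaProfile_pos x s).le]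
      rcases le_or_gt s 0 with h0 | h0
      · linarith [gammaProfile_le_of_nonpos (by linarith) hs h0]
      · rw [indicator_of_mem (mem_Ioi.2 h0)]
        linarith [gammaProfile_le_of_nonneg hx h0.le, exp_pos (-s ^ 2 / 2)]
    · rw [indicator_of_notMem hs, norm_zero]
      linarith [exp_pos (-s ^ 2 / 2)]
  · refine ae_of_all _ fun s => (tendsto_gammaProfile s).congr' ?_
    filter_upwards [tendsto_sqrt_atTop.eventually_gt_atTop (-s)] with x hx
    rw [indicator_of_mem (mem_Ioi.2 (neg_lt.1 hx))]

lemma setIntegral_Ioi_comp_mul_add {E : Type*} [NormedAddCommGroup E] [NormedSpace ℝ E]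
    (f : ℝ → E) {c : ℝ} (hc : 0 < c) (a d : ℝ) :
    ∫ s in Ioi a, f (c * s + d) = c⁻¹ • ∫ t in Ioi (c * a + d), f t := by
  have htranslate : ∫ y in Ioi (c * a), f (y + d) = ∫ t in Ioi (c * a + d), f t := by
    simpa [preimage_add_const_Ioi] using
      (measurePreserving_add_right volume d).setIntegral_preimage_emb
        (measurableEmbedding_addRight d) f (Ioi (c * a + d))
  rw [← htranslate]
  exact integral_comp_mul_left_Ioi (fun y => f (y + d)) a hc

section ChangeOfVariables

variable {x : ℝ}

lemma exp_neg_mul_rpow_eq_gammaProfile (hx : 0 < x) {s : ℝ} (hs : -√x < s) :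
    exp (-(√x * s + x)) * (√x * s + x) ^ x = x ^ x * exp (-x) * gammaProfile x s := by
  have hxu : x * (s / √x) = √x * s := by
    rw [mul_div_left_comm, div_sqrt, mul_comm]
  set u := s / √x
  have hu : 0 < 1 + u := by linarith [neg_one_lt_div_sqrt hx hs]
  have ht : √x * s + x = x * (1 + u) := by linear_combination -hxu
  have hexp : exp (-(x * (1 + u))) * exp (log (1 + u) * x) =
      exp (-x) * exp (x * (log (1 + u) - u)) := by
    rw [← exp_add, ← exp_add]
    ring_nf
  rw [ht, mul_rpow hx.le hu.le, rpow_def_of_pos hu, gammaProfile]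
  linear_combination x ^ x * hexp

lemma integral_exp_neg_mul_rpow_self_eq_gammaProfile (hx : 0 < x) :
    ∫ t in (0 : ℝ)..x, exp (-t) * t ^ x
      = √x * (x ^ x * exp (-x)) * ∫ s in Iic 0 ∩ Ioi (-√x), gammaProfile x s := by
  have hsqrt : 0 < √x := sqrt_pos.2 hx
  have hsubst := intervalIntegral.integral_comp_mul_add (fun t => exp (-t) * t ^ x) hsqrt.ne' x
    (a := -√x) (b := 0)
  rw [mul_neg, mul_self_sqrt hx.le, neg_add_cancel, mul_zero, zero_add, smul_eq_mul,
    eq_inv_mul_iff_mul_eq₀ hsqrt.ne'] at hsubst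
  rw [← hsubst, intervalIntegral.integral_of_le (by simp [hsqrt.le]), Iic_inter_Ioi,
    setIntegral_congr_fun measurableSet_Ioc fun s hs => exp_neg_mul_rpow_eq_gammaProfile hx hs.1,
    integral_const_mul]
  ring

lemma Gamma_add_one_eq_integral_gammaProfile (hx : 0 < x) :
    Gamma (x + 1) = √x * (x ^ x * exp (-x)) * ∫ s in Ioi (-√x), gammaProfile x s := by
  have hsqrt : 0 < √x := sqrt_pos.2 hx
  have hsubst := setIntegral_Ioi_comp_mul_add (fun t => exp (-t) * t ^ x) hsqrt (-√x) x
  rw [mul_neg, mul_self_sqrt hx.le, neg_add_cancel, smul_eq_mul,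
    eq_inv_mul_iff_mul_eq₀ hsqrt.ne'] at hsubst
  rw [Gamma_eq_integral (by linarith), add_sub_cancel_right, ← hsubst,
    setIntegral_congr_fun measurableSet_Ioi fun s hs => exp_neg_mul_rpow_eq_gammaProfile hx hs,
    integral_const_mul]
  ring

end ChangeOfVariables

lemma integral_exp_neg_sq_div_two : ∫ s : ℝ, exp (-s ^ 2 / 2) = √(2 * π) := by
  simp_rw [neg_div, div_eq_inv_mul, ← neg_mul, integral_gaussian, div_inv_eq_mul, mul_comm π]

lemma setIntegral_Iic_exp_neg_sq_div_two :
    ∫ s in Iic (0 : ℝ), exp (-s ^ 2 / 2) = √(2 * π) / 2 := by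
  rw [← neg_zero, ← integral_comp_neg_Ioi]
  simp_rw [neg_sq, neg_div, div_eq_inv_mul, ← neg_mul, integral_gaussian_Ioi, div_inv_eq_mul,
    mul_comm π]
  ring

/-- lim_{x→∞} γ(x+1, x)/Γ(x+1) = 1/2, where γ(a,x)=∫₀ˣ e^{-t} t^{a-1} dt. -/
theorem stmt_0 :
    Tendsto (fun x : ℝ =>
      (∫ t in (0:ℝ)..x, Real.exp (-t) * t ^ ((x + 1) - 1)) / Real.Gamma (x + 1))
      atTop (nhds (1/2)) := by
  have hnum := tendsto_setIntegral_gammaProfile (Iic 0)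
  have hden := tendsto_setIntegral_gammaProfile univ
  rw [setIntegral_Iic_exp_neg_sq_div_two] at hnum
  simp only [univ_inter, Measure.restrict_univ, integral_exp_neg_sq_div_two] at hden
  have hlim : √(2 * π) / 2 / √(2 * π) = 1 / 2 := by field_simp
  rw [← hlim]
  refine (hnum.div hden (by positivity)).congr' ?_
  filter_upwards [eventually_gt_atTop 0] with x hx
  rw [Pi.div_apply, add_sub_cancel_right, integral_exp_neg_mul_rpow_self_eq_gammaProfile hx,
    Gamma_add_one_eq_integral_gammaProfile hx, mul_div_mul_left _ _ (by positivity)]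
end

section
/- For all x ≥ 1 and u ≥ 0, (1 + u/√x)^x · e^{-√x·u} ≤ e^{-u²/(2(u+1))}. -/
/-!
Since `log y ≤ sinh (log y) = (y - y⁻¹) / 2` for `y ≥ 1`, with `y = 1 + t` we get
`log (1 + t) ≤ t - t² / (2 (t + 1))`. Taking `t = u / √x` and multiplying by `x` gives
`x log (1 + u / √x) ≤ √x u - u² / (2 (u / √x + 1))`, and `u / √x ≤ u` finishes the bound.
-/

namespace Real

lemma log_le_half_sub_inv {y : ℝ} (hy : 1 ≤ y) : log y ≤ (y - y⁻¹) / 2 := by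
  rw [← sinh_log (by linarith)]
  exact self_le_sinh_iff.mpr (log_nonneg hy)

lemma log_one_add_le_sub_sq_div {t : ℝ} (ht : 0 ≤ t) :
    log (1 + t) ≤ t - t ^ 2 / (2 * (t + 1)) := by
  have hlog := log_le_half_sub_inv (by linarith : 1 ≤ 1 + t)
  have hpos : t + 1 ≠ 0 := by positivity
  calc log (1 + t) ≤ ((1 + t) - (1 + t)⁻¹) / 2 := hlog
    _ = t - t ^ 2 / (2 * (t + 1)) := by field_simp; ring

lemma sq_mul_log_one_add_div_le {s u : ℝ} (hs : 1 ≤ s) (hu : 0 ≤ u) :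
    s ^ 2 * log (1 + u / s) ≤ s * u - u ^ 2 / (2 * (u + 1)) := by
  have hs0 : 0 < s := by linarith
  have hdiv : u / s ≤ u := div_le_self hu hs
  calc s ^ 2 * log (1 + u / s)
      ≤ s ^ 2 * (u / s - (u / s) ^ 2 / (2 * (u / s + 1))) := by
        gcongr
        exact log_one_add_le_sub_sq_div (by positivity)
    _ = s * u - u ^ 2 / (2 * (u / s + 1)) := by field_simp
    _ ≤ s * u - u ^ 2 / (2 * (u + 1)) := by gcongr

end Real

/-- For x ≥ 1 and u ≥ 0, (1+u/√x)^x e^{-√x u} ≤ e^{-u²/(2(u+1))}. -/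
theorem stmt_2 (x u : ℝ) (hx : 1 ≤ x) (hu : 0 ≤ u) :
    (1 + u / Real.sqrt x) ^ x * Real.exp (-(Real.sqrt x * u)) ≤
      Real.exp (-(u ^ 2 / (2 * (u + 1)))) := by
  have hs : 1 ≤ √x := Real.one_le_sqrt.mpr hx
  have hbase : 0 < 1 + u / √x := by positivity
  have key := Real.sq_mul_log_one_add_div_le hs hu
  rw [Real.sq_sqrt (by linarith)] at key
  rw [Real.rpow_def_of_pos hbase, ← Real.exp_add, Real.exp_le_exp]
  linarith
end

section
/- lim_{x→∞} Γ(x+1, x)/Γ(x+1) = 1/2, where Γ(a,x) is the upper incomplete gamma function. -/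
/-!
Substituting `t = x + √x u` in `∫ e^{-t} t^x dt` gives
`e^{-x} x^x √x ∫ exp(-x φ(u/√x)) du` with `φ(s) = s - log(1 + s)`, the lower limit `t = 0`
becoming `u = -√x` and `t = x` becoming `u = 0`. Since `φ(s) = s²/2 + O(s³)`, the rescaled
integrand tends to `e^{-u²/2}`, and the bound `φ(s) ≥ s²/(2(1 + |s|))` dominates it by a multiple
of `e^{-|u|/4}` for `x ≥ 1`. By dominated convergence the integrals over `u > 0` and over
`u > -√x` tend to `√(2π)/2` and `√(2π)`; the common factor `e^{-x} x^x √x` cancels in the ratio.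
-/

open Real Filter MeasureTheory Set Topology

theorem sq_div_two_le_sub_log_one_add {s : ℝ} (hs₁ : -1 < s) (hs : s ≤ 0) :
    s ^ 2 / 2 ≤ s - log (1 + s) := by
  have hsum := hasSum_pow_div_log_of_abs_lt_one (x := -s)
    (by rw [abs_of_nonneg (by linarith)]; linarith)
  have hpartial := sum_le_hasSum (Finset.range 2) (fun n _ => by
    have : 0 ≤ -s := by linarith
    positivity) hsum
  norm_num [Finset.sum_range_succ] at hpartial
  linarith

theorem sq_div_two_mul_one_add_le_sub_log_one_add {s : ℝ} (hs : 0 ≤ s) :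
    s ^ 2 / (2 * (1 + s)) ≤ s - log (1 + s) := by
  have hpos : 0 < 1 + s := by linarith
  have h := self_le_sinh_iff.2 (log_nonneg (by linarith : (1 : ℝ) ≤ 1 + s))
  rw [sinh_eq, exp_neg, exp_log hpos] at h
  have : s - ((1 + s) - (1 + s)⁻¹) / 2 = s ^ 2 / (2 * (1 + s)) := by field_simp; ring
  linarith

theorem sq_div_two_mul_one_add_abs_le_sub_log_one_add {s : ℝ} (hs : -1 < s) :
    s ^ 2 / (2 * (1 + |s|)) ≤ s - log (1 + s) := by
  rcases le_total 0 s with h | h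
  · rw [abs_of_nonneg h]
    exact sq_div_two_mul_one_add_le_sub_log_one_add h
  · refine le_trans ?_ (sq_div_two_le_sub_log_one_add hs h)
    gcongr
    linarith [abs_nonneg s]

theorem abs_sub_log_one_add_sub_sq_div_two_le {s : ℝ} (hs : |s| < 1) :
    |s - log (1 + s) - s ^ 2 / 2| ≤ |s| ^ 3 / (1 - |s|) := by
  have h := abs_log_sub_add_sum_range_le (x := -s) (by rwa [abs_neg]) 2
  simp only [Finset.sum_range_succ, Finset.sum_range_zero, abs_neg, sub_neg_eq_add] at h
  rw [← abs_neg]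
  convert h using 2
  push_cast
  ring

theorem exp_neg_mul_rpow_mul_one_add {x s : ℝ} (hx : 0 ≤ x) (hs : -1 < s) :
    exp (-(x * (1 + s))) * (x * (1 + s)) ^ x
      = exp (-x) * x ^ x * exp (-(x * (s - log (1 + s)))) := by
  have hpos : 0 < 1 + s := by linarith
  rw [mul_rpow hx hpos.le, rpow_def_of_pos hpos]
  have : exp (-(x * (1 + s))) * exp (log (1 + s) * x)
      = exp (-x) * exp (-(x * (s - log (1 + s)))) := by
    rw [← exp_add, ← exp_add]
    ring_nf
  linear_combination x ^ x * this

theorem tendsto_mul_sub_log_one_add_div_sqrt (u : ℝ) :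
    Tendsto (fun x => x * (u / √x - log (1 + u / √x))) atTop (𝓝 (u ^ 2 / 2)) := by
  have hsqrt : Tendsto (fun x => √x - |u|) atTop atTop :=
    tendsto_atTop_add_const_right _ _ tendsto_sqrt_atTop
  rw [← tendsto_sub_nhds_zero_iff]
  refine squeeze_zero_norm' ?_ (by simpa using hsqrt.inv_tendsto_atTop.const_mul (|u| ^ 3))
  filter_upwards [hsqrt.eventually_gt_atTop 0] with x hx
  have hsx : 0 < √x := by linarith [abs_nonneg u]
  have hx₀ : 0 < x := sqrt_pos.1 hsx
  have hs : |u / √x| < 1 := by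
    rw [abs_div, abs_of_pos hsx, div_lt_one hsx]
    linarith
  have hxs : x * (u / √x) ^ 2 = u ^ 2 := by
    rw [div_pow, sq_sqrt hx₀.le]
    field_simp
  calc ‖x * (u / √x - log (1 + u / √x)) - u ^ 2 / 2‖
      = x * |u / √x - log (1 + u / √x) - (u / √x) ^ 2 / 2| := by
        rw [norm_eq_abs, ← abs_of_pos hx₀, ← abs_mul, abs_of_pos hx₀]
        congr 1
        linear_combination hxs / 2
    _ ≤ x * (|u / √x| ^ 3 / (1 - |u / √x|)) :=
        mul_le_mul_of_nonneg_left (abs_sub_log_one_add_sub_sq_div_two_le hs) hx₀.le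
    _ = |u| ^ 3 * (√x - |u|)⁻¹ := by
        rw [abs_div, abs_of_pos hsx]
        have : √x - |u| ≠ 0 := hx.ne'
        field_simp
        linear_combination (-|u| ^ 3) * sq_sqrt hx₀.le

/-- `e^{-t} t^x / (e^{-x} x^x)` at `t = x + √x u`, set to `0` where `t ≤ 0`. -/
noncomputable def gammaKernel (x u : ℝ) : ℝ :=
  (Ioi (-√x)).indicator (fun u => exp (-(x * (u / √x - log (1 + u / √x))))) u

theorem gammaKernel_nonneg (x u : ℝ) : 0 ≤ gammaKernel x u :=
  indicator_nonneg (fun _ _ => (exp_pos _).le) u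

theorem tendsto_gammaKernel (u : ℝ) :
    Tendsto (fun x => gammaKernel x u) atTop (𝓝 (exp (-(1 / 2) * u ^ 2))) := by
  have h := (continuous_exp.tendsto _).comp (tendsto_mul_sub_log_one_add_div_sqrt u).neg
  refine (h.congr' ?_).trans (by ring_nf; rfl)
  filter_upwards [tendsto_sqrt_atTop.eventually_gt_atTop (-u)] with x hx
  rw [gammaKernel, indicator_of_mem (by simpa [neg_lt] using hx)]
  rfl

theorem gammaKernel_le {x : ℝ} (hx : 1 ≤ x) (u : ℝ) :
    gammaKernel x u ≤ exp (1 / 4) * exp (-(1 / 4) * |u|) := by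
  rw [gammaKernel, indicator_apply]
  split_ifs with hu
  · have hsx : 1 ≤ √x := one_le_sqrt.2 hx
    have hs : -1 < u / √x := by
      rw [lt_div_iff₀ (by linarith)]
      simpa [neg_lt] using hu
    have hlower := mul_le_mul_of_nonneg_left
      (sq_div_two_mul_one_add_abs_le_sub_log_one_add hs) (by linarith : (0 : ℝ) ≤ x)
    have hrescale : x * ((u / √x) ^ 2 / (2 * (1 + |u / √x|)))
        = u ^ 2 / (2 * (1 + |u| / √x)) := by
      rw [div_pow, sq_sqrt (by linarith), abs_div, abs_of_pos (by linarith : (0 : ℝ) < √x)]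
      field_simp
    have huniform : u ^ 2 / (2 * (1 + |u|)) ≤ u ^ 2 / (2 * (1 + |u| / √x)) := by
      gcongr
      exact div_le_self (abs_nonneg u) hsx
    have hlinear : (|u| - 1) / 4 ≤ u ^ 2 / (2 * (1 + |u|)) := by
      rw [div_le_div_iff₀ (by norm_num) (by positivity), ← sq_abs u]
      nlinarith [abs_nonneg u]
    rw [← exp_add]
    exact exp_le_exp.2 (by linarith)
  · positivity

theorem integrable_exp_neg_mul_abs {b : ℝ} (hb : 0 < b) :
    Integrable fun u : ℝ => exp (-b * |u|) := by
  have hIoi : IntegrableOn (fun u : ℝ => exp (-b * |u|)) (Ioi 0) :=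
    (exp_neg_integrableOn_Ioi 0 hb).congr_fun (fun u hu => by rw [abs_of_pos hu])
      measurableSet_Ioi
  have hIic : IntegrableOn (fun u : ℝ => exp (-b * |u|)) (Iic 0) := by
    have hneg : MeasurableEmbedding fun u : ℝ => -u := (Homeomorph.neg ℝ).measurableEmbedding
    rw [← Measure.map_neg_eq_self (volume : Measure ℝ), hneg.integrableOn_map_iff]
    simp_rw [Function.comp_def, abs_neg, neg_preimage, neg_Iic, neg_zero]
    exact (integrableOn_Ici_iff_integrableOn_Ioi).mpr hIoi
  rw [← integrableOn_univ, ← Iic_union_Ioi (a := (0 : ℝ))]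
  exact hIic.union hIoi

theorem tendsto_setIntegral_gammaKernel (S : Set ℝ) :
    Tendsto (fun x => ∫ u in S, gammaKernel x u) atTop
      (𝓝 (∫ u in S, exp (-(1 / 2) * u ^ 2))) := by
  refine tendsto_integral_filter_of_dominated_convergence
    (fun u => exp (1 / 4) * exp (-(1 / 4) * |u|))
    (Eventually.of_forall fun x => ?_) ?_ ?_ (ae_of_all _ tendsto_gammaKernel)
  · exact (Measurable.indicator (by fun_prop) measurableSet_Ioi).aestronglyMeasurable
  · filter_upwards [eventually_ge_atTop 1] with x hx
    refine ae_of_all _ fun u => ?_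
    rw [norm_of_nonneg (gammaKernel_nonneg x u)]
    exact gammaKernel_le hx u
  · exact ((integrable_exp_neg_mul_abs (by norm_num)).const_mul _).integrableOn

theorem integral_Ioi_comp_add_mul {E : Type*} [NormedAddCommGroup E] [NormedSpace ℝ E]
    (f : ℝ → E) (a b : ℝ) {c : ℝ} (hc : 0 < c) :
    ∫ t in Ioi (b + c * a), f t = c • ∫ u in Ioi a, f (b + c * u) := by
  rw [integral_comp_mul_left_Ioi' (fun t => f (b + t)) a hc,
    ← (measurePreserving_add_left volume b).setIntegral_preimage_emb
      (measurableEmbedding_addLeft b), preimage_const_add_Ioi, add_sub_cancel_left]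

theorem integral_Ioi_exp_neg_mul_rpow {x a : ℝ} (hx : 0 < x) (ha : -√x ≤ a) :
    ∫ t in Ioi (x + √x * a), exp (-t) * t ^ x
      = exp (-x) * x ^ x * √x * ∫ u in Ioi a, gammaKernel x u := by
  have hsx : 0 < √x := sqrt_pos.2 hx
  rw [integral_Ioi_comp_add_mul _ a x hsx, smul_eq_mul, mul_comm _ √x, ← integral_const_mul,
    ← integral_const_mul]
  refine setIntegral_congr_fun measurableSet_Ioi fun u hu => ?_
  have hu' : -√x < u := ha.trans_lt (mem_Ioi.1 hu)
  have hs : -1 < u / √x := by rwa [lt_div_iff₀ hsx, neg_one_mul]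
  have ht : x + √x * u = x * (1 + u / √x) := by
    field_simp
    linear_combination u * sq_sqrt hx.le
  rw [gammaKernel, indicator_of_mem (mem_Ioi.2 hu'), ht, exp_neg_mul_rpow_mul_one_add hx.le hs]
  ring

theorem setIntegral_gammaKernel_Ioi_neg_sqrt (x : ℝ) :
    ∫ u in Ioi (-√x), gammaKernel x u = ∫ u, gammaKernel x u :=
  setIntegral_eq_integral_of_forall_compl_eq_zero fun _ hu => indicator_of_notMem hu _

/-- lim_{x→∞} Γ(x+1, x)/Γ(x+1) = 1/2, with Γ(a,x)=∫ₓ^∞ e^{-t}t^{a-1}dt. -/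
theorem stmt_5 :
    Tendsto (fun x : ℝ =>
      (∫ t in Set.Ioi x, Real.exp (-t) * t ^ ((x + 1) - 1)) / Real.Gamma (x + 1))
      atTop (nhds (1/2)) := by
  have hupper := tendsto_setIntegral_gammaKernel (Ioi 0)
  have htotal := tendsto_setIntegral_gammaKernel univ
  rw [integral_gaussian_Ioi] at hupper
  rw [Measure.restrict_univ, integral_gaussian] at htotal
  have hpos : 0 < √(π / (1 / 2)) := sqrt_pos.2 (by positivity)
  refine (hupper.div htotal hpos.ne').congr' ?_ |>.trans
    (by rw [div_right_comm, div_self hpos.ne'])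
  filter_upwards [eventually_gt_atTop 0] with x hx
  have hupper_eq := integral_Ioi_exp_neg_mul_rpow hx (a := 0) (by simp)
  have htotal_eq := integral_Ioi_exp_neg_mul_rpow hx (a := -√x) le_rfl
  rw [mul_zero, add_zero] at hupper_eq
  rw [mul_neg, mul_self_sqrt hx.le, add_neg_cancel, setIntegral_gammaKernel_Ioi_neg_sqrt]
    at htotal_eq
  rw [Gamma_eq_integral (by linarith), add_sub_cancel_right, hupper_eq, htotal_eq, Pi.div_apply,
    mul_div_mul_left _ _ (by positivity)]
end

section
/- Let v > 0, d ≥ 1, α > d/2 + 1, β > 0 with β² bounded. Then there exist constants 0 < c ≤ C (independent of α, β) such that c · (Γ(α - d/2)/Γ(α)) β^d ≤ (1+‖λ‖²)^{v+d/2} m_{CH}^{α,β}(λ) ≤ C · Γ(α+v)/(Γ(α) β^{2v}) for all λ ∈ ℝ^d, where m_{CH}^{α,β}(λ) = (σ²(4v)^v β^{-2v}/(π^{d/2}Γ(α))) ∫₀^∞ (4vhβ^{-2}+‖λ‖²)^{-(v+d/2)} h^{v+α-1} e^{-h} dh is the spectral density of the Confluent Hypergeometric covariance. -/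
open Real MeasureTheory

open Set

/-!
Write `(1 + x)^p m(x)`, with `x = ‖λ‖²` and `p = v + d/2`, as the integral of
`((1 + x) / (4vh/β² + x))^p` against `h^(v+α-1) e^(-h) dh`, and fix `K ≥ max(β², 4v)`.
For every `h > 0` that ratio is at most `(K / 4v)(1 + h)/h ≤ (K / 2v) max(1, 1/h)`, so the
integral is at most a multiple of `Γ(α - d/2) + Γ(α + v)`; for `h ≥ 1` it is at least
`β² / (2Kh)`, so the integral dominates `(β² / 2K)^p` times the tail
`∫₁^∞ h^(α-d/2-1) e^(-h) dh`.
Since `α - d/2 ≥ 1`, shifting the Gamma integral by one shows that the tail is at least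
`Γ(α - d/2)/e`, and likewise `Γ(α - d/2) ≤ e Γ(α + v)`.
-/

theorem integral_Ioi_comp_add_right {E : Type*} [NormedAddCommGroup E] [NormedSpace ℝ E]
    (f : ℝ → E) (a b : ℝ) : ∫ x in Ioi a, f (x + b) = ∫ x in Ioi (a + b), f x := by
  have := (measurePreserving_add_right volume b).setIntegral_preimage_emb
    (measurableEmbedding_addRight b) f (Ioi (a + b))
  rwa [preimage_add_const_Ioi, add_sub_cancel_right] at this

theorem integrableOn_Ioi_comp_add_right_iff {E : Type*} [NormedAddCommGroup E]
    (f : ℝ → E) (a b : ℝ) :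
    IntegrableOn (fun x ↦ f (x + b)) (Ioi a) ↔ IntegrableOn f (Ioi (a + b)) := by
  have := (measurePreserving_add_right volume b).integrableOn_comp_preimage
    (measurableEmbedding_addRight b) (f := f) (s := Ioi (a + b))
  rwa [preimage_add_const_Ioi, add_sub_cancel_right] at this

namespace Real

theorem Gamma_le_exp_one_mul_integral_Ioi_one {s : ℝ} (hs : 1 ≤ s) :
    Gamma s ≤ exp 1 * ∫ h in Ioi 1, exp (-h) * h ^ (s - 1) := by
  have hs0 : 0 < s := by linarith
  have hshift := integral_Ioi_comp_add_right (fun h ↦ exp (-h) * h ^ (s - 1)) 0 1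
  have hint := (integrableOn_Ioi_comp_add_right_iff (fun h ↦ exp (-h) * h ^ (s - 1)) 0 1).2
    ((GammaIntegral_convergent hs0).mono_set (Ioi_subset_Ioi (by norm_num)))
  rw [zero_add] at hshift
  rw [← hshift, Gamma_eq_integral hs0, ← integral_const_mul]
  refine setIntegral_mono_on (GammaIntegral_convergent hs0) (hint.const_mul _)
    measurableSet_Ioi fun u (hu : 0 < u) ↦ ?_
  calc exp (-u) * u ^ (s - 1) ≤ exp (-u) * (u + 1) ^ (s - 1) := by
        gcongr; linarith
    _ = exp 1 * (exp (-(u + 1)) * (u + 1) ^ (s - 1)) := by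
        rw [← mul_assoc, ← exp_add]; ring_nf

theorem Gamma_le_exp_one_mul_Gamma {s t : ℝ} (hs : 1 ≤ s) (hst : s ≤ t) :
    Gamma s ≤ exp 1 * Gamma t := by
  have ht : 0 < t := by linarith
  have hsub : Ioi (1 : ℝ) ⊆ Ioi 0 := Ioi_subset_Ioi zero_le_one
  have hγs := (GammaIntegral_convergent (s := s) (by linarith)).mono_set hsub
  have hγt := GammaIntegral_convergent ht
  calc Gamma s ≤ exp 1 * ∫ h in Ioi 1, exp (-h) * h ^ (s - 1) :=
        Gamma_le_exp_one_mul_integral_Ioi_one hs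
    _ ≤ exp 1 * ∫ h in Ioi 1, exp (-h) * h ^ (t - 1) := by
        refine mul_le_mul_of_nonneg_left (setIntegral_mono_on hγs (hγt.mono_set hsub)
          measurableSet_Ioi fun h (hh : 1 < h) ↦ ?_) (exp_pos 1).le
        gcongr
        exact hh.le
    _ ≤ exp 1 * Gamma t := by
        rw [Gamma_eq_integral ht]
        refine mul_le_mul_of_nonneg_left
          (setIntegral_mono_set hγt ?_ hsub.eventuallyLE) (exp_pos 1).le
        filter_upwards [ae_restrict_mem measurableSet_Ioi] with h (hh : 0 < h)
        positivity

end Real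

section Ratio

variable {b c K x h : ℝ}

theorem one_add_div_le (hc : 0 < c) (hb : 0 < b) (hbK : b ≤ K) (hcK : c ≤ K) (hx : 0 ≤ x)
    (hh : 0 < h) : (1 + x) / (c * h / b + x) ≤ K / c * ((1 + h) / h) := by
  have hK : 0 < K := hb.trans_le hbK
  have hKb : 1 ≤ K / b := (one_le_div hb).2 hbK
  have hKc : 1 ≤ K / c := (one_le_div hc).2 hcK
  rw [div_le_iff₀ (by positivity)]
  calc 1 + x ≤ K / b * (1 + h) + K / c * (1 + 1 / h) * x := by
        gcongr ?_ + ?_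
        · exact one_le_mul_of_one_le_of_one_le hKb (le_add_of_nonneg_right hh.le)
        · exact le_mul_of_one_le_left hx
            (one_le_mul_of_one_le_of_one_le hKc (le_add_of_nonneg_right (by positivity)))
    _ = K / c * ((1 + h) / h) * (c * h / b + x) := by
        field_simp; ring

theorem div_div_le_one_add_div (hc : 0 < c) (hb : 0 < b) (hbK : b ≤ K) (hcK : c ≤ 2 * K)
    (hx : 0 ≤ x) (hh : 1 ≤ h) : b / (2 * K) / h ≤ (1 + x) / (c * h / b + x) := by
  have hK : 0 < K := hb.trans_le hbK
  have hh0 : 0 < h := zero_lt_one.trans_le hh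
  have hc1 : c / (2 * K) ≤ 1 := (div_le_one (by positivity)).2 hcK
  have hb1 : b / (2 * K * h) ≤ 1 := (div_le_one (by positivity)).2 (by nlinarith)
  rw [le_div_iff₀ (by positivity)]
  calc b / (2 * K) / h * (c * h / b + x) = c / (2 * K) + b / (2 * K * h) * x := by
        field_simp
    _ ≤ 1 + x := by gcongr; exact mul_le_of_le_one_left hx hb1

end Ratio

theorem one_add_div_rpow_le {h p : ℝ} (hh : 0 < h) (hp : 0 ≤ p) :
    ((1 + h) / h) ^ p ≤ 2 ^ p * (h ^ (-p) + 1) := by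
  have h2p : (0 : ℝ) ≤ 2 ^ p := by positivity
  have hnp : 0 ≤ h ^ (-p) := by positivity
  rcases le_total h 1 with h1 | h1
  · have : ((1 + h) / h) ^ p ≤ (2 / h) ^ p := by
      gcongr; linarith
    rw [div_rpow zero_le_two hh.le, div_eq_mul_inv (2 ^ p), ← rpow_neg hh.le] at this
    nlinarith
  · have : ((1 + h) / h) ^ p ≤ 2 ^ p := by
      gcongr; rw [div_le_iff₀ hh]; linarith
    nlinarith

/-- With `c = 4v`, `b = β²`, `p = v + d/2`, `q = v + α` and `x = ‖λ‖²` this is the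
integrand of the CH spectral density. -/
noncomputable def chIntegrand (c b p q x h : ℝ) : ℝ :=
  (c * h / b + x) ^ (-p) * h ^ (q - 1) * exp (-h)

section chIntegrand

variable {b c K x p q h : ℝ}

theorem rpow_neg_mul_gammaIntegrand (hh : 0 < h) :
    h ^ (-p) * (exp (-h) * h ^ (q - 1)) = exp (-h) * h ^ (q - p - 1) := by
  rw [mul_left_comm, ← rpow_add hh]; ring_nf

theorem one_add_rpow_mul_chIntegrand_eq (hc : 0 < c) (hb : 0 < b) (hx : 0 ≤ x) (hh : 0 < h) :
    (1 + x) ^ p * chIntegrand c b p q x h =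
      ((1 + x) / (c * h / b + x)) ^ p * (exp (-h) * h ^ (q - 1)) := by
  rw [chIntegrand, div_rpow (by positivity) (by positivity), rpow_neg (by positivity)]; ring

theorem one_add_rpow_mul_chIntegrand_le (hc : 0 < c) (hb : 0 < b) (hbK : b ≤ K) (hcK : c ≤ K)
    (hx : 0 ≤ x) (hp : 0 ≤ p) (hh : 0 < h) :
    (1 + x) ^ p * chIntegrand c b p q x h ≤
      (2 * K / c) ^ p * (exp (-h) * h ^ (q - p - 1) + exp (-h) * h ^ (q - 1)) := by
  have hK : 0 < K := hb.trans_le hbK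
  calc _ = ((1 + x) / (c * h / b + x)) ^ p * (exp (-h) * h ^ (q - 1)) :=
        one_add_rpow_mul_chIntegrand_eq hc hb hx hh
    _ ≤ (K / c * ((1 + h) / h)) ^ p * (exp (-h) * h ^ (q - 1)) := by
        gcongr; exact one_add_div_le hc hb hbK hcK hx hh
    _ ≤ (K / c) ^ p * (2 ^ p * (h ^ (-p) + 1)) * (exp (-h) * h ^ (q - 1)) := by
        rw [mul_rpow (by positivity) (by positivity)]
        gcongr
        exact one_add_div_rpow_le hh hp
    _ = (2 * K / c) ^ p * (exp (-h) * h ^ (q - p - 1) + exp (-h) * h ^ (q - 1)) := by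
        rw [← rpow_neg_mul_gammaIntegrand hh, mul_div_assoc, mul_rpow zero_le_two (by positivity)]
        ring

theorem le_one_add_rpow_mul_chIntegrand (hc : 0 < c) (hb : 0 < b) (hbK : b ≤ K)
    (hcK : c ≤ 2 * K) (hx : 0 ≤ x) (hp : 0 ≤ p) (hh : 1 ≤ h) :
    (b / (2 * K)) ^ p * (exp (-h) * h ^ (q - p - 1)) ≤ (1 + x) ^ p * chIntegrand c b p q x h := by
  have hK : 0 < K := hb.trans_le hbK
  have hh0 : 0 < h := zero_lt_one.trans_le hh
  calc _ = (b / (2 * K) / h) ^ p * (exp (-h) * h ^ (q - 1)) := by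
        rw [← rpow_neg_mul_gammaIntegrand hh0, div_rpow (by positivity) hh0.le, rpow_neg hh0.le]
        ring
    _ ≤ ((1 + x) / (c * h / b + x)) ^ p * (exp (-h) * h ^ (q - 1)) := by
        gcongr ?_ ^ _ * _; exact div_div_le_one_add_div hc hb hbK hcK hx hh
    _ = _ := (one_add_rpow_mul_chIntegrand_eq hc hb hx hh0).symm

theorem integrableOn_chIntegrand (hc : 0 < c) (hb : 0 < b) (hx : 0 ≤ x) (hp : 0 ≤ p)
    (hqp : 0 < q - p) : IntegrableOn (chIntegrand c b p q x) (Ioi 0) := by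
  refine ((GammaIntegral_convergent hqp).const_mul ((c / b) ^ (-p))).mono' ?_ ?_
  · refine ContinuousOn.aestronglyMeasurable ?_ measurableSet_Ioi
    refine ((ContinuousOn.rpow_const ?_ fun h (hh : 0 < h) ↦ Or.inl ?_).mul
      (continuousOn_id.rpow_const fun h (hh : 0 < h) ↦ Or.inl hh.ne')).mul (by fun_prop)
    · fun_prop
    · positivity
  · filter_upwards [ae_restrict_mem measurableSet_Ioi] with h (hh : 0 < h)
    rw [chIntegrand, norm_of_nonneg (by positivity), ← rpow_neg_mul_gammaIntegrand hh,
      ← mul_assoc, ← mul_rpow (by positivity) hh.le]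
    calc (c * h / b + x) ^ (-p) * h ^ (q - 1) * exp (-h)
        ≤ (c * h / b) ^ (-p) * h ^ (q - 1) * exp (-h) := by
          gcongr (?_ : ℝ) * _ * _
          exact rpow_le_rpow_of_nonpos (by positivity) (by linarith) (by linarith)
      _ = (c / b * h) ^ (-p) * (exp (-h) * h ^ (q - 1)) := by ring_nf

theorem one_add_rpow_mul_integral_chIntegrand_le (hc : 0 < c) (hb : 0 < b) (hbK : b ≤ K)
    (hcK : c ≤ K) (hx : 0 ≤ x) (hp : 0 ≤ p) (hqp : 0 < q - p) :
    (1 + x) ^ p * ∫ h in Ioi 0, chIntegrand c b p q x h ≤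
      (2 * K / c) ^ p * (Gamma (q - p) + Gamma q) := by
  have hq : 0 < q := hqp.trans_le (sub_le_self q hp)
  have hγ₁ := GammaIntegral_convergent hqp
  have hγ₂ := GammaIntegral_convergent hq
  rw [← integral_const_mul, Gamma_eq_integral hqp, Gamma_eq_integral hq,
    ← integral_add hγ₁ hγ₂, ← integral_const_mul]
  refine integral_mono_of_nonneg ?_ ((hγ₁.add hγ₂).const_mul _) ?_
  · filter_upwards [ae_restrict_mem measurableSet_Ioi] with h (hh : 0 < h)
    rw [chIntegrand]
    positivity
  · filter_upwards [ae_restrict_mem measurableSet_Ioi] with h (hh : 0 < h)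
    exact one_add_rpow_mul_chIntegrand_le hc hb hbK hcK hx hp hh

theorem le_one_add_rpow_mul_integral_chIntegrand (hc : 0 < c) (hb : 0 < b) (hbK : b ≤ K)
    (hcK : c ≤ 2 * K) (hx : 0 ≤ x) (hp : 0 ≤ p) (hqp : 1 ≤ q - p) :
    (b / (2 * K)) ^ p * (Gamma (q - p) / exp 1) ≤
      (1 + x) ^ p * ∫ h in Ioi 0, chIntegrand c b p q x h := by
  have hK : 0 < K := hb.trans_le hbK
  have hsub : Ioi (1 : ℝ) ⊆ Ioi 0 := Ioi_subset_Ioi zero_le_one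
  have hf : IntegrableOn (fun h ↦ (1 + x) ^ p * chIntegrand c b p q x h) (Ioi 0) :=
    (integrableOn_chIntegrand hc hb hx hp (zero_lt_one.trans_le hqp)).const_mul _
  rw [← integral_const_mul]
  calc (b / (2 * K)) ^ p * (Gamma (q - p) / exp 1)
      ≤ (b / (2 * K)) ^ p * ∫ h in Ioi 1, exp (-h) * h ^ (q - p - 1) := by
        gcongr
        rw [div_le_iff₀ (exp_pos 1), mul_comm]
        exact Gamma_le_exp_one_mul_integral_Ioi_one hqp
    _ ≤ ∫ h in Ioi 1, (1 + x) ^ p * chIntegrand c b p q x h := by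
        rw [← integral_const_mul]
        refine integral_mono_of_nonneg ?_ (hf.mono_set hsub) ?_
        · filter_upwards [ae_restrict_mem measurableSet_Ioi] with h (hh : 1 < h)
          have := zero_lt_one.trans hh
          positivity
        · filter_upwards [ae_restrict_mem measurableSet_Ioi] with h (hh : 1 < h)
          exact le_one_add_rpow_mul_chIntegrand hc hb hbK hcK hx hp hh.le
    _ ≤ ∫ h in Ioi 0, (1 + x) ^ p * chIntegrand c b p q x h := by
        refine setIntegral_mono_set hf ?_ hsub.eventuallyLE
        filter_upwards [ae_restrict_mem measurableSet_Ioi] with h (hh : 0 < h)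
        rw [chIntegrand]
        positivity

end chIntegrand

/-- The spectral density `m_CH^{α,β}(λ)` of the confluent hypergeometric covariance on `ℝ^d`,
as a function of `x = ‖λ‖²`. -/
noncomputable def chSpectralDensity (d : ℕ) (v σ2 α β x : ℝ) : ℝ :=
  σ2 * (4 * v) ^ v * β ^ (-(2 * v)) / (π ^ ((d : ℝ) / 2) * Gamma α) *
    ∫ h in Ioi 0, chIntegrand (4 * v) (β ^ 2) (v + (d : ℝ) / 2) (v + α) x h

section chSpectralDensity

variable {d : ℕ} {v σ2 α β x K : ℝ}

theorem le_one_add_rpow_mul_chSpectralDensity (hv : 0 < v) (hσ : 0 ≤ σ2) (hβ : 0 < β)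
    (hβK : β ^ 2 ≤ K) (hvK : 4 * v ≤ K) (hx : 0 ≤ x) (hα : (d : ℝ) / 2 + 1 ≤ α) :
    σ2 * (4 * v) ^ v / (exp 1 * (2 * K) ^ (v + (d : ℝ) / 2) * π ^ ((d : ℝ) / 2)) *
        (Gamma (α - (d : ℝ) / 2) / Gamma α) * β ^ (d : ℝ) ≤
      (1 + x) ^ (v + (d : ℝ) / 2) * chSpectralDensity d v σ2 α β x := by
  have hK : 0 < K := by linarith
  have hd : (0 : ℝ) ≤ d / 2 := by positivity
  have hΓ : 0 < Gamma α := Gamma_pos_of_pos (by linarith)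
  have hβp : (β ^ 2) ^ (v + (d : ℝ) / 2) = β ^ (2 * v) * β ^ (d : ℝ) := by
    rw [← rpow_two, ← rpow_mul hβ.le, ← rpow_add hβ]; ring_nf
  have key := le_one_add_rpow_mul_integral_chIntegrand (c := 4 * v) (p := v + (d : ℝ) / 2)
    (q := v + α) (by linarith) (by positivity) hβK (by linarith) hx (by positivity) (by linarith)
  rw [show v + α - (v + (d : ℝ) / 2) = α - (d : ℝ) / 2 by ring] at key
  set A := σ2 * (4 * v) ^ v * β ^ (-(2 * v)) / (π ^ ((d : ℝ) / 2) * Gamma α) with hA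
  calc _ = A * ((β ^ 2 / (2 * K)) ^ (v + (d : ℝ) / 2) *
          (Gamma (α - (d : ℝ) / 2) / exp 1)) := by
        rw [hA, div_rpow (by positivity) (by positivity), hβp, rpow_neg hβ.le]
        field_simp
    _ ≤ A * ((1 + x) ^ (v + (d : ℝ) / 2) *
          ∫ h in Ioi 0, chIntegrand (4 * v) (β ^ 2) (v + (d : ℝ) / 2) (v + α) x h) :=
        mul_le_mul_of_nonneg_left key (by positivity)
    _ = _ := by rw [chSpectralDensity]; ring

theorem one_add_rpow_mul_chSpectralDensity_le (hv : 0 < v) (hσ : 0 ≤ σ2) (hβ : 0 < β)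
    (hβK : β ^ 2 ≤ K) (hvK : 4 * v ≤ K) (hx : 0 ≤ x) (hα : (d : ℝ) / 2 + 1 ≤ α) :
    (1 + x) ^ (v + (d : ℝ) / 2) * chSpectralDensity d v σ2 α β x ≤
      σ2 * (4 * v) ^ v * (2 * K / (4 * v)) ^ (v + (d : ℝ) / 2) * (exp 1 + 1) /
        π ^ ((d : ℝ) / 2) * (Gamma (α + v) / (Gamma α * β ^ (2 * v))) := by
  have hK : 0 < K := by linarith
  have hd : (0 : ℝ) ≤ d / 2 := by positivity
  have hΓ : 0 < Gamma α := Gamma_pos_of_pos (by linarith)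
  have key := one_add_rpow_mul_integral_chIntegrand_le (c := 4 * v) (p := v + (d : ℝ) / 2)
    (q := v + α) (by linarith) (by positivity) hβK hvK hx (by positivity) (by linarith)
  have hΓle : Gamma (α - (d : ℝ) / 2) ≤ exp 1 * Gamma (v + α) :=
    Gamma_le_exp_one_mul_Gamma (by linarith) (by linarith)
  rw [show v + α - (v + (d : ℝ) / 2) = α - (d : ℝ) / 2 by ring] at key
  set A := σ2 * (4 * v) ^ v * β ^ (-(2 * v)) / (π ^ ((d : ℝ) / 2) * Gamma α) with hA
  calc _ = A * ((1 + x) ^ (v + (d : ℝ) / 2) *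
          ∫ h in Ioi 0, chIntegrand (4 * v) (β ^ 2) (v + (d : ℝ) / 2) (v + α) x h) := by
        rw [chSpectralDensity]; ring
    _ ≤ A * ((2 * K / (4 * v)) ^ (v + (d : ℝ) / 2) *
          (exp 1 * Gamma (v + α) + Gamma (v + α))) := by
        refine mul_le_mul_of_nonneg_left (key.trans ?_) (by positivity)
        gcongr
    _ = _ := by
        rw [hA, rpow_neg hβ.le, add_comm α v]
        field_simp

end chSpectralDensity

theorem stmt_15_general (d : ℕ) (v σ2 M : ℝ)
    (hv : 0 < v) (hσ : 0 < σ2) :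
    ∃ c C : ℝ, 0 < c ∧ c ≤ C ∧
      ∀ α β : ℝ, (d:ℝ)/2 + 1 < α → 0 < β → β ^ 2 ≤ M →
        ∀ l : EuclideanSpace ℝ (Fin d),
          c * (Real.Gamma (α - (d:ℝ)/2) / Real.Gamma α) * β ^ (d:ℝ) ≤
              (1 + ‖l‖ ^ 2) ^ (v + (d:ℝ)/2) *
                ((σ2 * (4*v) ^ v * β ^ (-(2*v)) / (Real.pi ^ ((d:ℝ)/2) * Real.Gamma α)) *
                  ∫ h in Set.Ioi (0:ℝ),
                    (4*v*h / β ^ 2 + ‖l‖ ^ 2) ^ (-(v + (d:ℝ)/2)) * h ^ (v + α - 1) *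
                      Real.exp (-h)) ∧
            (1 + ‖l‖ ^ 2) ^ (v + (d:ℝ)/2) *
                ((σ2 * (4*v) ^ v * β ^ (-(2*v)) / (Real.pi ^ ((d:ℝ)/2) * Real.Gamma α)) *
                  ∫ h in Set.Ioi (0:ℝ),
                    (4*v*h / β ^ 2 + ‖l‖ ^ 2) ^ (-(v + (d:ℝ)/2)) * h ^ (v + α - 1) *
                      Real.exp (-h))
              ≤ C * (Real.Gamma (α + v) / (Real.Gamma α * β ^ (2*v))) := by
  set K := max M (4 * v)
  set c₀ := σ2 * (4 * v) ^ v / (exp 1 * (2 * K) ^ (v + (d : ℝ) / 2) * π ^ ((d : ℝ) / 2))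
  set C₀ := σ2 * (4 * v) ^ v * (2 * K / (4 * v)) ^ (v + (d : ℝ) / 2) * (exp 1 + 1) /
    π ^ ((d : ℝ) / 2)
  have hK : 0 < K := lt_max_of_lt_right (by linarith)
  have hc₀ : 0 < c₀ := by positivity
  have hC₀ : 0 < C₀ := by positivity
  refine ⟨min c₀ C₀, max c₀ C₀, lt_min hc₀ hC₀, min_le_max,
    fun α β hα hβ hβM l ↦ ?_⟩
  have hβK : β ^ 2 ≤ K := hβM.trans (le_max_left _ _)
  have hd : (0 : ℝ) ≤ d / 2 := by positivity
  have hΓ₁ : 0 < Gamma (α - d / 2) := Gamma_pos_of_pos (by linarith)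
  have hΓ₂ : 0 < Gamma α := Gamma_pos_of_pos (by linarith)
  have hΓ₃ : 0 < Gamma (α + v) := Gamma_pos_of_pos (by linarith)
  constructor
  · calc _ ≤ c₀ * (Gamma (α - d / 2) / Gamma α) * β ^ (d : ℝ) := by
          gcongr; exact min_le_left _ _
      _ ≤ _ := le_one_add_rpow_mul_chSpectralDensity hv hσ.le hβ hβK (le_max_right _ _)
          (by positivity) hα.le
  · calc _ ≤ C₀ * (Gamma (α + v) / (Gamma α * β ^ (2 * v))) :=
          one_add_rpow_mul_chSpectralDensity_le hv hσ.le hβ hβK (le_max_right _ _)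
            (by positivity) hα.le
      _ ≤ _ := by gcongr; exact le_max_right _ _

/-- Two-sided bounds on the CH spectral density: for α > d/2+1 and β² bounded by M,
c·(Γ(α-d/2)/Γ(α))β^d ≤ (1+‖λ‖²)^{v+d/2} m_CH^{α,β}(λ) ≤ C·Γ(α+v)/(Γ(α)β^{2v}),
with c, C independent of α, β, λ. -/
theorem stmt_15 (d : ℕ) (hd : 1 ≤ d) (v σ2 M : ℝ)
    (hv : 0 < v) (hσ : 0 < σ2) (hM : 0 < M) :
    ∃ c C : ℝ, 0 < c ∧ c ≤ C ∧
      ∀ α β : ℝ, (d:ℝ)/2 + 1 < α → 0 < β → β ^ 2 ≤ M →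
        ∀ l : EuclideanSpace ℝ (Fin d),
          c * (Real.Gamma (α - (d:ℝ)/2) / Real.Gamma α) * β ^ (d:ℝ) ≤
              (1 + ‖l‖ ^ 2) ^ (v + (d:ℝ)/2) *
                ((σ2 * (4*v) ^ v * β ^ (-(2*v)) / (Real.pi ^ ((d:ℝ)/2) * Real.Gamma α)) *
                  ∫ h in Set.Ioi (0:ℝ),
                    (4*v*h / β ^ 2 + ‖l‖ ^ 2) ^ (-(v + (d:ℝ)/2)) * h ^ (v + α - 1) *
                      Real.exp (-h)) ∧
            (1 + ‖l‖ ^ 2) ^ (v + (d:ℝ)/2) *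
                ((σ2 * (4*v) ^ v * β ^ (-(2*v)) / (Real.pi ^ ((d:ℝ)/2) * Real.Gamma α)) *
                  ∫ h in Set.Ioi (0:ℝ),
                    (4*v*h / β ^ 2 + ‖l‖ ^ 2) ^ (-(v + (d:ℝ)/2)) * h ^ (v + α - 1) *
                      Real.exp (-h))
              ≤ C * (Real.Gamma (α + v) / (Real.Gamma α * β ^ (2*v))) :=
  stmt_15_general d v σ2 M hv hσ
end

section
/- Let v > 0, d ≥ 1, α > d/2+1, β > 0. For all λ ∈ ℝ^d with ‖λ‖²β² ≥ α+v−1, the CH spectral density satisfies (1+‖λ‖²)^{v+d/2} m_{CH}^{α,β}(λ) ≥ c · β^{-2v} Γ(α+v)/Γ(α) for a constant c > 0 independent of α, β, λ. -/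
/-!
Restrict the integral to `h ≤ T := 2(α + v)`. There the weight `(4vh/β² + ‖λ‖²)^{-(v+d/2)}` is at
least its value at `T`, and `‖λ‖²β² ≥ α + v - 1` together with `α ≥ 1` makes `4vT/β² + ‖λ‖²` at
most `(8v + 9)(1 + ‖λ‖²)`. What remains is the truncated Gamma integral `∫₀^T e^{-h} h^{s-1} dh`,
which is at least `Γ(s)/2` as soon as `T ≥ 2s`, by a Markov bound on the tail.
-/

open Real MeasureTheory Set

namespace Real

lemma integral_Ioi_exp_neg_mul_rpow_le_Gamma_add_one_div (s T : ℝ) (hs : 0 < s) (hT : 0 < T) :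
    ∫ h in Ioi T, exp (-h) * h ^ (s - 1) ≤ Gamma (s + 1) / T := by
  have hint : IntegrableOn (fun h ↦ exp (-h) * h ^ (s - 1)) (Ioi T) :=
    (GammaIntegral_convergent hs).mono_set (Ioi_subset_Ioi hT.le)
  have hint₁ : IntegrableOn (fun h ↦ exp (-h) * h ^ (s + 1 - 1)) (Ioi 0) :=
    GammaIntegral_convergent (by linarith)
  -- Markov: `1 ≤ h / T` on the tail.
  have hmarkov : ∀ h ∈ Ioi T, exp (-h) * h ^ (s - 1) ≤ T⁻¹ * (exp (-h) * h ^ (s + 1 - 1)) := by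
    intro h (hh : T < h)
    have hh₀ : 0 < h := hT.trans hh
    rw [add_sub_cancel_right, show h ^ s = h ^ (s - 1) * h by
      rw [← rpow_add_one hh₀.ne', sub_add_cancel], le_inv_mul_iff₀ hT]
    have : 0 ≤ exp (-h) * h ^ (s - 1) := by positivity
    nlinarith
  calc ∫ h in Ioi T, exp (-h) * h ^ (s - 1)
      ≤ ∫ h in Ioi T, T⁻¹ * (exp (-h) * h ^ (s + 1 - 1)) :=
        setIntegral_mono_on hint ((hint₁.mono_set (Ioi_subset_Ioi hT.le)).const_mul _)
          measurableSet_Ioi hmarkov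
    _ = T⁻¹ * ∫ h in Ioi T, exp (-h) * h ^ (s + 1 - 1) := integral_const_mul _ _
    _ ≤ T⁻¹ * ∫ h in Ioi 0, exp (-h) * h ^ (s + 1 - 1) := by
        refine mul_le_mul_of_nonneg_left ?_ (inv_nonneg.2 hT.le)
        refine setIntegral_mono_set hint₁ ?_ (Ioi_subset_Ioi hT.le).eventuallyLE
        filter_upwards [ae_restrict_mem measurableSet_Ioi] with h (hh : 0 < h)
        positivity
    _ = Gamma (s + 1) / T := by rw [← Gamma_eq_integral (by linarith), inv_mul_eq_div]

lemma Gamma_div_two_le_integral_Ioc (s T : ℝ) (hs : 0 < s) (hT : 2 * s ≤ T) :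
    Gamma s / 2 ≤ ∫ h in Ioc 0 T, exp (-h) * h ^ (s - 1) := by
  have hT₀ : 0 < T := by linarith
  have hint := GammaIntegral_convergent hs
  have hsplit : Gamma s = (∫ h in Ioc 0 T, exp (-h) * h ^ (s - 1))
      + ∫ h in Ioi T, exp (-h) * h ^ (s - 1) := by
    rw [Gamma_eq_integral hs, ← Ioc_union_Ioi_eq_Ioi hT₀.le]
    exact setIntegral_union (Ioc_disjoint_Ioi le_rfl) measurableSet_Ioi
      (hint.mono_set Ioc_subset_Ioi_self) (hint.mono_set (Ioi_subset_Ioi hT₀.le))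
  have htail : Gamma (s + 1) / T ≤ Gamma s / 2 := by
    rw [Gamma_add_one hs.ne', div_le_div_iff₀ hT₀ two_pos]
    nlinarith [Gamma_pos_of_pos hs]
  linarith [integral_Ioi_exp_neg_mul_rpow_le_Gamma_add_one_div s T hs hT₀]

lemma mul_Gamma_div_two_le_integral_of_antitoneOn {w : ℝ → ℝ} (hw₀ : ∀ h ∈ Ici 0, 0 ≤ w h)
    (hw : AntitoneOn w (Ici 0)) (s T : ℝ) (hs : 0 < s) (hT : 2 * s ≤ T) :
    w T * (Gamma s / 2) ≤ ∫ h in Ioi 0, w h * h ^ (s - 1) * exp (-h) := by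
  have hT₀ : (0 : ℝ) ≤ T := by linarith
  have hgamma := GammaIntegral_convergent hs
  have hnonneg : ∀ h ∈ Ioi (0 : ℝ), 0 ≤ w h * h ^ (s - 1) * exp (-h) := by
    intro h (hh : 0 < h)
    have := hw₀ h hh.le
    positivity
  have hint : IntegrableOn (fun h ↦ w h * h ^ (s - 1) * exp (-h)) (Ioi 0) := by
    refine Integrable.mono' (hgamma.const_mul (w 0)) ?_ ?_
    · exact (((aemeasurable_restrict_of_antitoneOn measurableSet_Ioi
        (hw.mono Ioi_subset_Ici_self)).mul (by fun_prop)).mul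
        (by fun_prop)).aestronglyMeasurable
    · filter_upwards [ae_restrict_mem measurableSet_Ioi] with h hh
      have : (0 : ℝ) < h := hh
      rw [norm_of_nonneg (hnonneg h hh), mul_assoc, mul_comm (h ^ _)]
      exact mul_le_mul_of_nonneg_right (hw self_mem_Ici (Ioi_subset_Ici_self hh) hh.le)
        (by positivity)
  calc w T * (Gamma s / 2)
      ≤ w T * ∫ h in Ioc 0 T, exp (-h) * h ^ (s - 1) :=
        mul_le_mul_of_nonneg_left (Gamma_div_two_le_integral_Ioc s T hs hT) (hw₀ T hT₀)
    _ = ∫ h in Ioc 0 T, w T * (exp (-h) * h ^ (s - 1)) := (integral_const_mul _ _).symm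
    _ ≤ ∫ h in Ioc 0 T, w h * h ^ (s - 1) * exp (-h) := by
        refine setIntegral_mono_on ((hgamma.mono_set Ioc_subset_Ioi_self).const_mul _)
          (hint.mono_set Ioc_subset_Ioi_self) measurableSet_Ioc fun h hh ↦ ?_
        rw [mul_comm (exp _), ← mul_assoc]
        have : 0 < h := hh.1
        gcongr
        exact hw (le_of_lt hh.1) hT₀ hh.2
    _ ≤ ∫ h in Ioi 0, w h * h ^ (s - 1) * exp (-h) := by
        refine setIntegral_mono_set hint ?_ Ioc_subset_Ioi_self.eventuallyLE
        filter_upwards [ae_restrict_mem measurableSet_Ioi] with h hh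
        exact hnonneg h hh

lemma rpow_neg_le_one_add_rpow_mul_rpow_neg {x y K p : ℝ} (hx : 0 ≤ x) (hy : 0 < y) (hK : 0 < K)
    (hp : 0 ≤ p) (hyx : y ≤ K * x) :
    K ^ (-p) ≤ (1 + x) ^ p * y ^ (-p) := by
  have h₁ : y ≤ K * (1 + x) := by nlinarith
  calc K ^ (-p) = (1 + x) ^ p * (K * (1 + x)) ^ (-p) := by
        rw [mul_rpow hK.le (by positivity), mul_left_comm, ← rpow_add (by positivity),
          add_neg_cancel, rpow_zero, mul_one]
    _ ≤ (1 + x) ^ p * y ^ (-p) :=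
        mul_le_mul_of_nonneg_left (rpow_le_rpow_of_nonpos hy h₁ (neg_nonpos.2 hp))
          (by positivity)

lemma le_one_add_rpow_mul_integral_weighted_Gamma {v α β x p : ℝ} (hv : 0 < v) (hα : 1 ≤ α)
    (hβ : 0 < β) (hp : 0 ≤ p) (hx : α + v - 1 ≤ x * β ^ 2) :
    (8*v + 9) ^ (-p) * (Gamma (v + α) / 2) ≤
      (1 + x) ^ p * ∫ h in Ioi 0, (4*v*h / β ^ 2 + x) ^ (-p) * h ^ (v + α - 1) * exp (-h) := by
  have hx₀ : 0 < x := pos_of_mul_pos_left (by linarith : 0 < x * β ^ 2) (by positivity)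
  set w : ℝ → ℝ := fun h ↦ (4*v*h / β ^ 2 + x) ^ (-p)
  have hw : AntitoneOn w (Ici 0) := fun a (ha : 0 ≤ a) b _ hab ↦
    rpow_le_rpow_of_nonpos (by positivity) (by gcongr) (neg_nonpos.2 hp)
  -- `α ≥ 1` gives `v (α + v) ≤ (v + 1)(α + v - 1)`, which `hx` bounds by `(v + 1) x β²`.
  have hweight : (8*v + 9) ^ (-p) ≤ (1 + x) ^ p * w (2 * (v + α)) := by
    refine rpow_neg_le_one_add_rpow_mul_rpow_neg hx₀.le (by positivity) (by positivity) hp ?_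
    have : 4*v*(2*(v + α)) / β ^ 2 ≤ 8*(v + 1) * x := by
      rw [div_le_iff₀ (by positivity)]
      nlinarith
    linarith
  calc (8*v + 9) ^ (-p) * (Gamma (v + α) / 2)
      ≤ (1 + x) ^ p * (w (2 * (v + α)) * (Gamma (v + α) / 2)) := by
        rw [← mul_assoc]
        gcongr
    _ ≤ _ := by
        gcongr
        exact mul_Gamma_div_two_le_integral_of_antitoneOn
          (fun h (hh : 0 ≤ h) ↦ by positivity) hw (v + α) (2 * (v + α)) (by linarith) le_rfl

end Real

theorem stmt_16_general (d : ℕ) (v σ2 : ℝ) (hv : 0 < v) (hσ : 0 < σ2) :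
    ∃ c : ℝ, 0 < c ∧
      ∀ α β : ℝ, (d:ℝ)/2 + 1 < α → 0 < β →
        ∀ l : EuclideanSpace ℝ (Fin d), α + v - 1 ≤ ‖l‖ ^ 2 * β ^ 2 →
          (1 + ‖l‖ ^ 2) ^ (v + (d:ℝ)/2) *
              ((σ2 * (4*v) ^ v * β ^ (-(2*v)) / (Real.pi ^ ((d:ℝ)/2) * Real.Gamma α)) *
                ∫ h in Set.Ioi (0:ℝ),
                  (4*v*h / β ^ 2 + ‖l‖ ^ 2) ^ (-(v + (d:ℝ)/2)) * h ^ (v + α - 1) *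
                    Real.exp (-h))
            ≥ c * β ^ (-(2*v)) * (Real.Gamma (α + v) / Real.Gamma α) := by
  set p : ℝ := v + (d:ℝ)/2
  refine ⟨σ2 * (4*v) ^ v * (8*v + 9) ^ (-p) / (2 * π ^ ((d:ℝ)/2)), by positivity, ?_⟩
  intro α β hα hβ l hl
  have hα₁ : 1 ≤ α := by linarith [(by positivity : (0:ℝ) ≤ (d:ℝ)/2)]
  have hC : 0 ≤ σ2 * (4*v) ^ v * β ^ (-(2*v)) / (π ^ ((d:ℝ)/2) * Gamma α) := by
    have := Gamma_pos_of_pos (by linarith : 0 < α)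
    positivity
  rw [ge_iff_le, add_comm α v, mul_left_comm]
  calc σ2 * (4*v) ^ v * (8*v + 9) ^ (-p) / (2 * π ^ ((d:ℝ)/2)) * β ^ (-(2*v))
        * (Gamma (v + α) / Gamma α)
      = (σ2 * (4*v) ^ v * β ^ (-(2*v)) / (π ^ ((d:ℝ)/2) * Gamma α))
          * ((8*v + 9) ^ (-p) * (Gamma (v + α) / 2)) := by ring
    _ ≤ _ := mul_le_mul_of_nonneg_left
        (le_one_add_rpow_mul_integral_weighted_Gamma hv hα₁ hβ (by positivity) hl) hC

/-- Tail lower bound for the CH spectral density: if ‖λ‖²β² ≥ α+v-1, then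
(1+‖λ‖²)^{v+d/2} m_CH^{α,β}(λ) ≥ c·β^{-2v}Γ(α+v)/Γ(α), with c independent of α, β, λ. -/
theorem stmt_16 (d : ℕ) (hd : 1 ≤ d) (v σ2 : ℝ) (hv : 0 < v) (hσ : 0 < σ2) :
    ∃ c : ℝ, 0 < c ∧
      ∀ α β : ℝ, (d:ℝ)/2 + 1 < α → 0 < β →
        ∀ l : EuclideanSpace ℝ (Fin d), α + v - 1 ≤ ‖l‖ ^ 2 * β ^ 2 →
          (1 + ‖l‖ ^ 2) ^ (v + (d:ℝ)/2) *
              ((σ2 * (4*v) ^ v * β ^ (-(2*v)) / (Real.pi ^ ((d:ℝ)/2) * Real.Gamma α)) *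
                ∫ h in Set.Ioi (0:ℝ),
                  (4*v*h / β ^ 2 + ‖l‖ ^ 2) ^ (-(v + (d:ℝ)/2)) * h ^ (v + α - 1) *
                    Real.exp (-h))
            ≥ c * β ^ (-(2*v)) * (Real.Gamma (α + v) / Real.Gamma α) :=
  stmt_16_general d v σ2 hv hσ
end
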